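/- If (X, Y) is an exceptional pair in mod Λ for a hereditary algebra Λ (i.e., X, Y exceptional with Hom(Y,X) = Ext¹(Y,X) = 0), and R_Y X denotes the right mutation, then dim(R_Y X) = ± σ_{dim Y}(dim X), where σ_β(γ) = γ − (β,γ)β is the reflection at β. -/
import Mathlib


/-- **Mutation and reflections.**  Work in an axiomatized module category for a
hereditary path algebra: objects `Obj`, dimension vectors `dimv`, dimensions
`hom X Y = dim_k Hom(X,Y)` and `ext1 X Y = dim_k Ext¹(X,Y)`, and a bilinear Euler
form with `⟨dim X, dim Y⟩ = hom X Y − ext1 X Y`.  Let `(X,Y)` be an exceptional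
pair (`X`, `Y` exceptional with `Hom(Y,X) = Ext¹(Y,X) = 0`) and let `R = R_Y X` be
the right mutation: an exceptional module such that `(Y,R)` is an exceptional pair
generating the same thick subcategory (so `dim R` lies in the span of `dim X` and
`dim Y`).  Then `dim (R_Y X) = ± σ_{dim Y}(dim X)`, where
`σ_β(γ) = γ − (β,γ) β` is the reflection at `β` with respect to the symmetrized
Euler form `(β,γ) = ⟨β,γ⟩ + ⟨γ,β⟩`. -/
theorem dim_right_mutation_eq_reflection
    {Obj : Type*} {n : ℕ}
    (hom ext1 : Obj → Obj → ℕ)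
    (dimv : Obj → (Fin n → ℤ))
    (euler : (Fin n → ℤ) → (Fin n → ℤ) → ℤ)
    (hbil_left : ∀ v v' w, euler (v + v') w = euler v w + euler v' w)
    (hbil_right : ∀ v w w', euler v (w + w') = euler v w + euler v w')
    (hsmul_left : ∀ (c : ℤ) (v w), euler (c • v) w = c * euler v w)
    (hsmul_right : ∀ (c : ℤ) (v w), euler v (c • w) = c * euler v w)
    (heuler : ∀ A B : Obj, euler (dimv A) (dimv B) = (hom A B : ℤ) - (ext1 A B : ℤ))
    (X Y R : Obj)
    (hXexc : hom X X = 1 ∧ ext1 X X = 0)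
    (hYexc : hom Y Y = 1 ∧ ext1 Y Y = 0)
    (hRexc : hom R R = 1 ∧ ext1 R R = 0)
    (hpairXY : hom Y X = 0 ∧ ext1 Y X = 0)
    (hpairYR : hom R Y = 0 ∧ ext1 R Y = 0)
    (hthick : ∃ a b : ℤ, dimv R = a • dimv X + b • dimv Y) :
    dimv R =
        dimv X - (euler (dimv Y) (dimv X) + euler (dimv X) (dimv Y)) • dimv Y ∨
      dimv R =
        -(dimv X - (euler (dimv Y) (dimv X) + euler (dimv X) (dimv Y)) • dimv Y) := by

  obtain ⟨a, b, hab⟩ := hthick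
  have eYX : euler (dimv Y) (dimv X) = 0 := by
    rw [heuler, hpairXY.1, hpairXY.2]; simp
  have eXX : euler (dimv X) (dimv X) = 1 := by
    rw [heuler, hXexc.1, hXexc.2]; simp
  have eYY : euler (dimv Y) (dimv Y) = 1 := by
    rw [heuler, hYexc.1, hYexc.2]; simp
  have eRR : euler (dimv R) (dimv R) = 1 := by
    rw [heuler, hRexc.1, hRexc.2]; simp
  have eRY : euler (dimv R) (dimv Y) = 0 := by
    rw [heuler, hpairYR.1, hpairYR.2]; simp
  set s := euler (dimv X) (dimv Y) with hs
  have h1 : a * s + b = 0 := by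
    have := eRY
    rw [hab, hbil_left, hsmul_left, hsmul_left, eYY] at this
    linarith
  have h2 : a * a = 1 := by
    have := eRR
    rw [hab, hbil_left, hsmul_left, hsmul_left, hbil_right, hbil_right,
      hsmul_right, hsmul_right, hsmul_right, hsmul_right, eXX, eYY, eYX, ← hs] at this
    have hb : b = -(a * s) := by linarith
    rw [hb] at this
    linear_combination this
  have hb : b = -(a * s) := by linarith
  rcases mul_self_eq_one_iff.mp h2 with ha | ha
  · left
    rw [hab, hb, ha]
    ext i
    simp [eYX]
    ring
  · right
    rw [hab, hb, ha]
    ext i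
    simp [eYX]
    ring
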